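/- Let M be a connected manifold with fundamental group G = π₁(M, x₀). The source-connected Lie groupoid integrations of the tangent algebroid TM are in bijective, order-reversing correspondence with the normal subgroups of G: every totally disconnected normal Lie subgroupoid N of the fundamental groupoid Π₁(M) is determined by its isotropy group N(x₀, x₀) at a single point x₀, which is a normal subgroup of π₁(M, x₀), and conversely every normal subgroup of π₁(M, x₀) arises this way. -/
import Mathlib


open CategoryTheory

section Aux

variable {C : Type*} [Groupoid C]

lemma aux_uniq (hconn : ∀ c d : C, Nonempty (c ⟶ d)) (x₀ : C)
    (S T : Subgroupoid C) (hS : S.IsNormal) (hT : T.IsNormal)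
    (hSd : S.IsTotallyDisconnected) (hTd : T.IsTotallyDisconnected)
    (h : S.arrows x₀ x₀ = T.arrows x₀ x₀) : S = T := by
  rw [Subgroupoid.isTotallyDisconnected_iff] at hSd hTd
  have key : ∀ (S T : Subgroupoid C), S.IsNormal → T.IsNormal →
      (∀ c d, (S.arrows c d).Nonempty → c = d) →
      S.arrows x₀ x₀ = T.arrows x₀ x₀ →
      ∀ (c d : C) (f : c ⟶ d), f ∈ S.arrows c d → f ∈ T.arrows c d := by
    intro S T hS hT hSd h c d f hf
    obtain rfl : c = d := hSd c d ⟨f, hf⟩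
    obtain ⟨p⟩ := hconn x₀ c
    have h1 : p ≫ f ≫ Groupoid.inv p ∈ S.arrows x₀ x₀ := hS.conj' p hf
    rw [h] at h1
    have h2 := hT.conj p h1
    simpa only [Groupoid.inv_eq_inv, Category.assoc, IsIso.inv_hom_id,
      Category.comp_id, IsIso.inv_hom_id_assoc] using h2
  ext c d f
  exact ⟨key S T hS hT hSd h c d f, key T S hT hS hTd h.symm c d f⟩

lemma aux_exists (hconn : ∀ c d : C, Nonempty (c ⟶ d)) (x₀ : C)
    (K : Subgroup (x₀ ⟶ x₀)) (hK : K.Normal) :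
    ∃ S : Subgroupoid C, S.IsNormal ∧ S.IsTotallyDisconnected ∧
      S.arrows x₀ x₀ = (K : Set _) := by
  classical
  let γ : ∀ c : C, x₀ ⟶ c := fun c => (hconn x₀ c).some
  refine ⟨⟨fun c d => {f | c = d ∧ γ c ≫ f ≫ Groupoid.inv (γ d) ∈ K}, ?_, ?_⟩, ?_, ?_, ?_⟩
  · rintro c d p ⟨rfl, hk⟩
    refine ⟨rfl, ?_⟩
    have := K.inv_mem hk
    have e : (γ c ≫ p ≫ Groupoid.inv (γ c))⁻¹ = γ c ≫ Groupoid.inv p ≫ Groupoid.inv (γ c) := by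
      show Groupoid.inv _ = _
      simp only [Groupoid.inv_eq_inv, IsIso.inv_comp, IsIso.inv_inv, Category.assoc]
    rwa [e] at this
  · rintro c d e p ⟨rfl, hp⟩ q ⟨rfl, hq⟩
    refine ⟨rfl, ?_⟩
    have := K.mul_mem hp hq
    have e2 : (γ c ≫ p ≫ Groupoid.inv (γ c)) * (γ c ≫ q ≫ Groupoid.inv (γ c))
        = γ c ≫ (p ≫ q) ≫ Groupoid.inv (γ c) := by
      show (_ ≫ _) ≫ _ = _
      simp only [Groupoid.inv_eq_inv, Category.assoc, IsIso.inv_hom_id_assoc]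
    rwa [e2] at this
  · constructor
    · constructor
      · intro c
        refine ⟨rfl, ?_⟩
        have : γ c ≫ 𝟙 c ≫ Groupoid.inv (γ c) = (1 : x₀ ⟶ x₀) := by
          simp [Groupoid.inv_eq_inv, Groupoid.vertexGroup_one]
        rw [this]; exact K.one_mem
    · rintro c d p f ⟨-, hk⟩
      refine ⟨rfl, ?_⟩
      have h1 := hK.conj_mem _ hk (γ d ≫ Groupoid.inv p ≫ Groupoid.inv (γ c))
      have e3 : (γ d ≫ Groupoid.inv p ≫ Groupoid.inv (γ c)) *
          (γ c ≫ f ≫ Groupoid.inv (γ c)) *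
          (γ d ≫ Groupoid.inv p ≫ Groupoid.inv (γ c))⁻¹
          = γ d ≫ (Groupoid.inv p ≫ f ≫ p) ≫ Groupoid.inv (γ d) := by
        show (_ ≫ _) ≫ Groupoid.inv _ = _
        simp only [Groupoid.inv_eq_inv, IsIso.inv_comp, IsIso.inv_inv, Category.assoc,
          IsIso.inv_hom_id_assoc]
      rwa [e3] at h1
  · rw [Subgroupoid.isTotallyDisconnected_iff]
    rintro c d ⟨f, rfl, -⟩
    rfl
  · ext f
    show (x₀ = x₀ ∧ γ x₀ ≫ f ≫ Groupoid.inv (γ x₀) ∈ K) ↔ f ∈ K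
    have e4 : γ x₀ ≫ f ≫ Groupoid.inv (γ x₀) = γ x₀ * f * (γ x₀)⁻¹ := by
      show _ = (_ ≫ _) ≫ _
      simp only [Category.assoc]
      rfl
    constructor
    · rintro ⟨-, hk⟩
      rw [e4] at hk
      have := hK.conj_mem _ hk (γ x₀)⁻¹
      simpa [mul_assoc] using this
    · intro hk
      exact ⟨rfl, by rw [e4]; exact hK.conj_mem _ hk _⟩

end Aux

/-- for a (path-)connected space `M` with basepoint `x₀`, the
totally disconnected normal Lie subgroupoids `N` of the fundamental groupoid
`Π₁(M)` — which classify the source-connected integrations of `TM` — correspond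
bijectively to the normal subgroups of `π₁(M,x₀)`: the isotropy `N(x₀,x₀)` is a
normal subgroup of the vertex group at `x₀`, it determines `N` uniquely, and
every normal subgroup arises this way. -/
theorem stmt_5 {M : Type*} [TopologicalSpace M] [PathConnectedSpace M] (x₀ : M) :
    (∀ S : Subgroupoid (FundamentalGroupoid M), ∀ hS : S.IsNormal,
      S.IsTotallyDisconnected →
      (S.vertexSubgroup (c := FundamentalGroupoid.mk x₀) ⟨𝟙 _, hS.wide _⟩).Normal) ∧
    (∀ S T : Subgroupoid (FundamentalGroupoid M), S.IsNormal → T.IsNormal →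
      S.IsTotallyDisconnected → T.IsTotallyDisconnected →
      S.arrows (FundamentalGroupoid.mk x₀) (FundamentalGroupoid.mk x₀)
        = T.arrows (FundamentalGroupoid.mk x₀) (FundamentalGroupoid.mk x₀) →
      S = T) ∧
    (∀ K : Subgroup (FundamentalGroupoid.mk x₀ ⟶ FundamentalGroupoid.mk x₀),
      K.Normal →
      ∃ S : Subgroupoid (FundamentalGroupoid M), S.IsNormal ∧ S.IsTotallyDisconnected ∧
        S.arrows (FundamentalGroupoid.mk x₀) (FundamentalGroupoid.mk x₀) = (K : Set _)) := by
  have hconn : ∀ c d : FundamentalGroupoid M, Nonempty (c ⟶ d) := fun c d =>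
    Nonempty.intro (Quotient.mk (Path.Homotopic.setoid c.as d.as)
      (PathConnectedSpace.somePath c.as d.as))
  refine ⟨?_, ?_, ?_⟩
  · intro S hS _
    exact @Subgroupoid.IsNormal.vertexSubgroup (FundamentalGroupoid M) _ S hS (FundamentalGroupoid.mk x₀) ⟨𝟙 _, hS.wide _⟩
  · intro S T hS hT hSd hTd h
    exact aux_uniq hconn _ S T hS hT hSd hTd h
  · intro K hK
    exact aux_exists hconn _ K hK
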